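/- Decomposition by counting function level sets avoids vees: let S* be a finite set of tiles and S a set of tiles such that C(s) := #{s* ∈ S* : s < s*} satisfies 1 ≤ C(s) ≤ 2^K for all s ∈ S. Define U(k) = {s ∈ S : 2^{k−1} ≤ C(s) < 2^k} for 1 ≤ k ≤ K. Then no U(k) contains a vee, and hence each U(k) decomposes uniquely into maximal trees. -/

import Mathlib

/-- A tile is a dyadic rectangle `I_s × ω_s`, encoded by the dyadic data of its
spatial interval `I_s = [2^{kI} nI, 2^{kI}(nI+1))` and its frequency interval
`ω_s = [2^{kω} nω, 2^{kω}(nω+1))`. -/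
structure Tile where
  kI : ℤ
  nI : ℤ
  kω : ℤ
  nω : ℤ

namespace Tile

/-- The spatial dyadic interval `I_s` of a tile. -/
def spat (s : Tile) : Set ℝ :=
  Set.Ico ((2:ℝ) ^ s.kI * s.nI) ((2:ℝ) ^ s.kI * (s.nI + 1))

/-- The frequency dyadic interval `ω_s` of a tile. -/
def freq (s : Tile) : Set ℝ :=
  Set.Ico ((2:ℝ) ^ s.kω * s.nω) ((2:ℝ) ^ s.kω * (s.nω + 1))

/-- The partial order on tiles: `s ≤ s'` iff `I_s ⊆ I_{s'}` and `ω_s ⊇ ω_{s'}`. -/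
def le (s s' : Tile) : Prop := s.spat ⊆ s'.spat ∧ s'.freq ⊆ s.freq

/-- Strict order on tiles. -/
def lt (s s' : Tile) : Prop := Tile.le s s' ∧ ¬ Tile.le s' s

end Tile

/-! Two tiles of equal area whose spatial intervals meet and whose frequency intervals meet are
comparable, since dyadic intervals are nested or disjoint. So for a vee `s < s', s''` no tile lies
above both `s'` and `s''`, whence `C(s) ≥ C(s') + C(s'')`; if `s', s'' ∈ U(k)` this is at least
`2^k`, so `s ∉ U(k)`. In a finite vee-free set, two maximal elements above a common element are
comparable, hence equal. -/

section VeeFree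

variable {α : Type*}

def IsVee [Preorder α] (s a b : α) : Prop := s < a ∧ s < b ∧ ¬ a ≤ b ∧ ¬ b ≤ a

theorem ncard_lt_add_ncard_lt_le [Preorder α] {T : Set α} (hT : T.Finite) {s a b : α}
    (hsa : s < a) (hsb : s < b) (hab : ∀ t ∈ T, a < t → ¬ b < t) :
    {t ∈ T | a < t}.ncard + {t ∈ T | b < t}.ncard ≤ {t ∈ T | s < t}.ncard := by
  have hdisj : Disjoint {t ∈ T | a < t} {t ∈ T | b < t} :=
    Set.disjoint_left.2 fun t ⟨ht, hat⟩ ⟨_, hbt⟩ => hab t ht hat hbt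
  rw [← Set.ncard_union_eq hdisj (hT.sep _) (hT.sep _)]
  refine Set.ncard_le_ncard (Set.union_subset ?_ ?_) (hT.sep _)
  · exact fun t ⟨ht, hat⟩ => ⟨ht, hsa.trans hat⟩
  · exact fun t ⟨ht, hbt⟩ => ⟨ht, hsb.trans hbt⟩

theorem Set.Finite.existsUnique_maximal_ge_of_not_isVee [PartialOrder α] {U : Set α}
    (hU : U.Finite) (hvee : ¬ ∃ s ∈ U, ∃ a ∈ U, ∃ b ∈ U, IsVee s a b) {s : α} (hs : s ∈ U) :
    ∃! m, s ≤ m ∧ Maximal (· ∈ U) m := by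
  obtain ⟨m, hsm, hm⟩ := hU.exists_le_maximal hs
  refine ⟨m, ⟨hsm, hm⟩, fun m' ⟨hsm', hm'⟩ => ?_⟩
  by_contra hne
  have hmm' : ¬ m ≤ m' := fun h => hne (hm.eq_of_le hm'.prop h).symm
  have hm'm : ¬ m' ≤ m := fun h => hne (hm'.eq_of_le hm.prop h)
  exact hvee ⟨s, hs, m', hm'.prop, m, hm.prop,
    hsm'.lt_of_not_ge fun h => hm'm (h.trans hsm), hsm.lt_of_not_ge fun h => hmm' (h.trans hsm'),
    hm'm, hmm'⟩

end VeeFree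

theorem two_pow_le_two_pow_sub_one_add (k : ℕ) : 2 ^ k ≤ 2 ^ (k - 1) + 2 ^ (k - 1) := by
  rcases k with _ | k
  · simp
  · rw [Nat.add_sub_cancel, pow_succ]
    omega

def dyadicInterval (k n : ℤ) : Set ℝ := Set.Ico (2 ^ k * n) (2 ^ k * (n + 1))

theorem mem_dyadicInterval_iff {k n : ℤ} {x : ℝ} : x ∈ dyadicInterval k n ↔ ⌊x / 2 ^ k⌋ = n := by
  have h2k : (0 : ℝ) < 2 ^ k := by positivity
  rw [Int.floor_eq_iff, le_div_iff₀ h2k, div_lt_iff₀ h2k, dyadicInterval, Set.mem_Ico,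
    mul_comm (n : ℝ), mul_comm ((n : ℝ) + 1)]

theorem dyadicInterval_nonempty (k n : ℤ) : (dyadicInterval k n).Nonempty :=
  ⟨2 ^ k * n, mem_dyadicInterval_iff.2 <| by
    rw [mul_div_cancel_left₀ _ (by positivity), Int.floor_intCast]⟩

theorem floor_div_two_zpow_add (x : ℝ) (k : ℤ) (d : ℕ) :
    ⌊x / 2 ^ (k + d)⌋ = ⌊x / 2 ^ k⌋ / 2 ^ d := by
  have h2d : (2 : ℝ) ^ d = ((2 ^ d : ℕ) : ℝ) := by push_cast; rfl
  rw [zpow_add₀ two_ne_zero, ← div_div, zpow_natCast, h2d, Int.floor_div_natCast]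
  push_cast
  rfl

theorem dyadicInterval_subset_of_le {k n k' n' : ℤ} (hk : k ≤ k')
    (h : (dyadicInterval k n ∩ dyadicInterval k' n').Nonempty) :
    dyadicInterval k n ⊆ dyadicInterval k' n' := by
  obtain ⟨d, rfl⟩ : ∃ d : ℕ, k' = k + d := ⟨(k' - k).toNat, by omega⟩
  obtain ⟨x, hx, hx'⟩ := h
  intro y hy
  rw [mem_dyadicInterval_iff] at hx hx' hy ⊢
  rw [floor_div_two_zpow_add] at hx' ⊢
  rwa [hy, ← hx]

theorem eq_and_eq_of_dyadicInterval_eq {k n k' n' : ℤ} (h : dyadicInterval k n = dyadicInterval k' n') :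
    k = k' ∧ n = n' := by
  have h2k : (0 : ℝ) < 2 ^ k := by positivity
  obtain ⟨hl, hr⟩ := (Set.Ico_eq_Ico_iff (Or.inl (by nlinarith))).1 h
  have hpow : (2 : ℝ) ^ k = 2 ^ k' := by linear_combination hr - hl
  obtain rfl : k = k' := zpow_right_injective₀ two_pos (by norm_num) hpow
  exact ⟨rfl, by exact_mod_cast mul_left_cancel₀ h2k.ne' hl⟩

namespace Tile

theorem eq_of_spat_eq_of_freq_eq {s t : Tile} (hI : s.spat = t.spat) (hω : s.freq = t.freq) :
    s = t := by
  obtain ⟨h₁, h₂⟩ := eq_and_eq_of_dyadicInterval_eq hI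
  obtain ⟨h₃, h₄⟩ := eq_and_eq_of_dyadicInterval_eq hω
  cases s
  cases t
  congr

instance : PartialOrder Tile where
  le := Tile.le
  lt := Tile.lt
  le_refl _ := ⟨subset_rfl, subset_rfl⟩
  le_trans _ _ _ h h' := ⟨h.1.trans h'.1, h'.2.trans h.2⟩
  lt_iff_le_not_ge _ _ := Iff.rfl
  le_antisymm _ _ h h' := eq_of_spat_eq_of_freq_eq (h.1.antisymm h'.1) (h'.2.antisymm h.2)

theorem le_or_le_of_area_eq {s t : Tile} (hst : s.kI + s.kω = t.kI + t.kω)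
    (hI : (s.spat ∩ t.spat).Nonempty) (hω : (s.freq ∩ t.freq).Nonempty) : s ≤ t ∨ t ≤ s := by
  rcases le_total s.kI t.kI with h | h
  · exact .inl ⟨dyadicInterval_subset_of_le h hI,
      dyadicInterval_subset_of_le (by omega) (Set.inter_comm _ _ ▸ hω)⟩
  · exact .inr ⟨dyadicInterval_subset_of_le h (Set.inter_comm _ _ ▸ hI),
      dyadicInterval_subset_of_le (by omega) hω⟩

theorem le_or_le_of_area_eq_of_bounds {s a b t : Tile} (hab : a.kI + a.kω = b.kI + b.kω)
    (hsa : s ≤ a) (hsb : s ≤ b) (hat : a ≤ t) (hbt : b ≤ t) : a ≤ b ∨ b ≤ a :=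
  le_or_le_of_area_eq hab ((dyadicInterval_nonempty s.kI s.nI).mono (Set.subset_inter hsa.1 hsb.1))
    ((dyadicInterval_nonempty t.kω t.nω).mono (Set.subset_inter hat.2 hbt.2))

end Tile

theorem level_sets_vee_free_general (A : ℤ) (K : ℕ) (Sstar S : Set Tile)
    (hfin : Sstar.Finite) (hSfin : S.Finite)
    (hA : ∀ t ∈ S ∪ Sstar, t.kI + t.kω = A)
    (C : Tile → ℕ) (hC : ∀ s : Tile, C s = {t ∈ Sstar | Tile.lt s t}.ncard) :
    ∀ k : ℕ, 1 ≤ k → k ≤ K →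
      (¬ ∃ s ∈ {s ∈ S | 2 ^ (k-1) ≤ C s ∧ C s < 2 ^ k},
          ∃ s' ∈ {s ∈ S | 2 ^ (k-1) ≤ C s ∧ C s < 2 ^ k},
          ∃ s'' ∈ {s ∈ S | 2 ^ (k-1) ≤ C s ∧ C s < 2 ^ k},
            Tile.lt s s' ∧ Tile.lt s s'' ∧ ¬ Tile.le s' s'' ∧ ¬ Tile.le s'' s') ∧
      (∀ s ∈ {s ∈ S | 2 ^ (k-1) ≤ C s ∧ C s < 2 ^ k},
        ∃! m : Tile, m ∈ {s ∈ S | 2 ^ (k-1) ≤ C s ∧ C s < 2 ^ k} ∧ Tile.le s m ∧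
          ∀ t ∈ {s ∈ S | 2 ^ (k-1) ≤ C s ∧ C s < 2 ^ k}, Tile.le m t → m = t) := by
  intro k _ _
  set U : Set Tile := {s ∈ S | 2 ^ (k-1) ≤ C s ∧ C s < 2 ^ k}
  have hvee : ¬ ∃ s ∈ U, ∃ a ∈ U, ∃ b ∈ U, IsVee s a b := by
    rintro ⟨s, ⟨-, -, hCs⟩, a, ⟨haS, hCa, -⟩, b, ⟨hbS, hCb, -⟩, hsa, hsb, hab, hba⟩
    have harea : a.kI + a.kω = b.kI + b.kω := (hA a (.inl haS)).trans (hA b (.inl hbS)).symm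
    have hsum : C a + C b ≤ C s := by
      simp only [hC]
      exact ncard_lt_add_ncard_lt_le hfin hsa hsb fun t _ hat hbt =>
        (Tile.le_or_le_of_area_eq_of_bounds harea hsa.le hsb.le hat.le hbt.le).elim hab hba
    have := two_pow_le_two_pow_sub_one_add k
    omega
  refine ⟨hvee, fun s hs => ?_⟩
  obtain ⟨m, ⟨hsm, hm⟩, huniq⟩ := (hSfin.sep _).existsUnique_maximal_ge_of_not_isVee hvee hs
  exact ⟨m, ⟨hm.prop, hsm, fun t ht => hm.eq_of_le ht⟩,
    fun m' ⟨hm', hsm', hmax'⟩ => huniq m' ⟨hsm', maximal_mem_iff.2 ⟨hm', hmax'⟩⟩⟩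

/-- decomposition by level sets of the counting function avoids
vees.  Let `S*` be a finite set of tiles and `S` a finite set of tiles (all of
the same fixed area `2^A`) with `C(s) := #{s* ∈ S* : s < s*}` satisfying
`1 ≤ C(s) ≤ 2^K` on `S`.  Then each level set
`U(k) = {s ∈ S : 2^{k-1} ≤ C(s) < 2^k}` (`1 ≤ k ≤ K`) contains no vee, and
hence decomposes uniquely into maximal trees: each `s ∈ U(k)` lies below a
unique maximal element of `U(k)`. -/
theorem level_sets_vee_free (A : ℤ) (K : ℕ) (Sstar S : Set Tile)
    (hfin : Sstar.Finite) (hSfin : S.Finite)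
    (hA : ∀ t ∈ S ∪ Sstar, t.kI + t.kω = A)
    (C : Tile → ℕ) (hC : ∀ s : Tile, C s = {t ∈ Sstar | Tile.lt s t}.ncard)
    (hbound : ∀ s ∈ S, 1 ≤ C s ∧ C s ≤ 2 ^ K) :
    ∀ k : ℕ, 1 ≤ k → k ≤ K →
      (¬ ∃ s ∈ {s ∈ S | 2 ^ (k-1) ≤ C s ∧ C s < 2 ^ k},
          ∃ s' ∈ {s ∈ S | 2 ^ (k-1) ≤ C s ∧ C s < 2 ^ k},
          ∃ s'' ∈ {s ∈ S | 2 ^ (k-1) ≤ C s ∧ C s < 2 ^ k},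
            Tile.lt s s' ∧ Tile.lt s s'' ∧ ¬ Tile.le s' s'' ∧ ¬ Tile.le s'' s') ∧
      (∀ s ∈ {s ∈ S | 2 ^ (k-1) ≤ C s ∧ C s < 2 ^ k},
        ∃! m : Tile, m ∈ {s ∈ S | 2 ^ (k-1) ≤ C s ∧ C s < 2 ^ k} ∧ Tile.le s m ∧
          ∀ t ∈ {s ∈ S | 2 ^ (k-1) ≤ C s ∧ C s < 2 ^ k}, Tile.le m t → m = t) :=
  level_sets_vee_free_general A K Sstar S hfin hSfin hA C hC
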